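/- arXiv:2104.06516 — 3 statements merged into one kernel-verified Lean document; each statement's English description precedes it below -/
import Mathlib

section
/- Let K be a field, V a K-vector space, and c ∈ V ⊗[K] V a copairing with induced map c♯ : Dual K V → V. Suppose there exists a linear map p : V → Dual K V satisfying the snake relation c♯ ∘ p = id_V (i.e., the copairing admits a compatible pairing). Then V is finite-dimensional over K, the map c♯ is bijective (so c is non-degenerate), and p is a two-sided inverse of c♯. -/
/-!
A copairing `c` makes `c♯` a finite-rank map, being the image of an element of
`(Dual K V)^* ⊗ V` under `dualTensorHom`, and finite-rank maps are stable under
precomposition. The snake relation therefore puts `id_V` in the range of `dualTensorHom`,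
so `V` is finite-dimensional. Then `Dual K V` and `V` have the same dimension, so the
surjection `c♯` is bijective and its right inverse `p` is a two-sided inverse.
-/

open TensorProduct

/-- The contraction map `c♯ : Dual K V → V` induced by a copairing `c ∈ V ⊗[K] V`:
it sends `ψ` to `Σᵢ ψ(xᵢ) • yᵢ` whenever `c = Σᵢ xᵢ ⊗ yᵢ`
(see `copairingSharp_tmul`). -/
noncomputable def copairingSharp (K : Type*) [Field K] {V : Type*} [AddCommGroup V]
    [Module K V] (c : V ⊗[K] V) : Module.Dual K V →ₗ[K] V :=
  ((dualTensorHom K (Module.Dual K V) V).comp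
    (TensorProduct.map (Module.Dual.eval K V) LinearMap.id)) c

/-- Characterization on simple tensors: `c♯(ψ) = ψ(x) • y` when `c = x ⊗ y`. -/
lemma copairingSharp_tmul (K : Type*) [Field K] {V : Type*} [AddCommGroup V]
    [Module K V] (x y : V) (ψ : Module.Dual K V) :
    copairingSharp K (x ⊗ₜ[K] y) ψ = ψ x • y := by
  simp [copairingSharp]

theorem dualTensorHom_comp_mem_range {R M N W : Type*} [CommRing R]
    [AddCommGroup M] [Module R M] [AddCommGroup N] [Module R N] [AddCommGroup W] [Module R W]
    (t : Module.Dual R M ⊗[R] N) (f : W →ₗ[R] M) :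
    dualTensorHom R M N t ∘ₗ f ∈ LinearMap.range (dualTensorHom R W N) :=
  ⟨f.dualMap.rTensor N t, LinearMap.congr_fun (dualTensorHom_comp_rTensor_dualMap f) t⟩

theorem finiteDimensional_of_copairingSharp_comp_eq_id {K V : Type*} [Field K]
    [AddCommGroup V] [Module K V] {c : V ⊗[K] V} {p : V →ₗ[K] Module.Dual K V}
    (h : copairingSharp K c ∘ₗ p = LinearMap.id) : FiniteDimensional K V := by
  apply Module.Finite.of_one_mem_range_dualTensorHom
  rw [Module.End.one_eq_id, ← h]
  exact dualTensorHom_comp_mem_range _ p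

theorem LinearMap.comp_eq_id_swap_of_finrank_eq {K V W : Type*} [DivisionRing K]
    [AddCommGroup V] [Module K V] [AddCommGroup W] [Module K W]
    [FiniteDimensional K V] [FiniteDimensional K W]
    (H : Module.finrank K V = Module.finrank K W) {f : V →ₗ[K] W} {g : W →ₗ[K] V}
    (h : f ∘ₗ g = LinearMap.id) : g ∘ₗ f = LinearMap.id := by
  have hf_surj : Function.Surjective f := fun w ↦ ⟨g w, LinearMap.congr_fun h w⟩
  have hf_inj : Function.Injective f := (injective_iff_surjective_of_finrank_eq_finrank H).2 hf_surj
  ext v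
  exact hf_inj (LinearMap.congr_fun h (f v))

/-- if some linear map `p : V → Dual K V` satisfies the snake relation
`c♯ ∘ p = id`, then `V` is finite-dimensional, `c♯` is bijective (so `c` is
non-degenerate), and `p` is a two-sided inverse of `c♯`. -/
theorem copairing_snake_relation (K : Type*) [Field K]
    {V : Type*} [AddCommGroup V] [Module K V] (c : V ⊗[K] V)
    (p : V →ₗ[K] Module.Dual K V)
    (hsnake : (copairingSharp K c).comp p = LinearMap.id) :
    FiniteDimensional K V ∧ Function.Bijective (copairingSharp K c) ∧
      (copairingSharp K c).comp p = LinearMap.id ∧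
      p.comp (copairingSharp K c) = LinearMap.id := by
  have hfd : FiniteDimensional K V := finiteDimensional_of_copairingSharp_comp_eq_id hsnake
  have hleft : p ∘ₗ copairingSharp K c = LinearMap.id :=
    LinearMap.comp_eq_id_swap_of_finrank_eq Subspace.dual_finrank_eq hsnake
  have hbij : Function.Bijective (copairingSharp K c) :=
    ⟨Function.LeftInverse.injective (LinearMap.congr_fun hleft),
      Function.RightInverse.surjective (LinearMap.congr_fun hsnake)⟩
  exact ⟨hfd, hbij, hsnake, hleft⟩
end

section
/- Let X be a topological space in which no connected component is compact (i.e., for every x ∈ X the connected component of x is not compact), let M be a type with a zero element, and let f : X → M be a locally constant function with compact support (the closure of the set {x | f x ≠ 0} is compact). Then f is identically zero. -/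
theorem IsLocallyConstant.connectedComponent_subset_support {X M : Type*} [TopologicalSpace X]
    [Zero M] {f : X → M} (hf : IsLocallyConstant f) {x : X} (hx : f x ≠ 0) :
    connectedComponent x ⊆ Function.support f := fun y hy => by
  rwa [Function.mem_support,
    hf.apply_eq_of_isPreconnected isPreconnected_connectedComponent hy mem_connectedComponent]

theorem HasCompactSupport.isCompact_connectedComponent {X M : Type*} [TopologicalSpace X]
    [Zero M] {f : X → M} (hsupp : HasCompactSupport f) (hf : IsLocallyConstant f) {x : X}
    (hx : f x ≠ 0) : IsCompact (connectedComponent x) :=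
  hsupp.of_isClosed_subset isClosed_connectedComponent
    ((hf.connectedComponent_subset_support hx).trans (subset_tsupport f))

/-- a locally constant, compactly supported function on a space in
which no connected component is compact is identically zero. -/
theorem isLocallyConstant_hasCompactSupport_eq_zero
    {X M : Type*} [TopologicalSpace X] [Zero M]
    (hX : ∀ x : X, ¬ IsCompact (connectedComponent x))
    (f : X → M) (hf : IsLocallyConstant f) (hsupp : HasCompactSupport f) :
    f = 0 := by
  funext x
  by_contra hx
  exact hX x (hsupp.isCompact_connectedComponent hf hx)
end

section
/- Let K be a field and A a unital associative K-algebra. Let c ∈ A ⊗[K] A be a copairing whose induced map c♯ : Dual K A → A has range consisting of nilpotent elements of A (c is entirely degenerate). If there exists a K-linear map p : A → Dual K A satisfying the snake relation c♯ ∘ p = id_A (i.e., a pairing compatible with the copairing exists), then A is the zero algebra: 1 = 0 in A. -/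
open TensorProduct

/-- if the copairing `c` on a unital associative `K`-algebra `A` is
entirely degenerate (the range of `c♯` consists of nilpotent elements) and there is
a linear map `p : A → Dual K A` with `c♯ ∘ p = id` (a compatible pairing), then `A`
is the zero algebra: `1 = 0` in `A`. -/
theorem zero_algebra_of_entirely_degenerate_and_pairing (K : Type*) [Field K]
    {A : Type*} [Ring A] [Algebra K A] (c : A ⊗[K] A)
    (hdeg : ∀ x ∈ LinearMap.range (copairingSharp K c), IsNilpotent x)
    (p : A →ₗ[K] Module.Dual K A)
    (hsnake : (copairingSharp K c).comp p = LinearMap.id) :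
    (1 : A) = 0 := by
  obtain ⟨ψ, hψ⟩ := LinearMap.surjective_of_comp_eq_id p _ hsnake 1
  obtain ⟨n, hn⟩ : IsNilpotent (1 : A) := hψ ▸ hdeg _ ⟨ψ, rfl⟩
  rwa [one_pow] at hn
end
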